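/- Correctness of the Quantum Teleportation Protocol: for all a, b ∈ ℂ and all (s₁, s₂) ∈ {0,1}², (⟨x_{s₁}| ⊗ ⟨x_{s₂}| ⊗ (X^{s₂} Z^{s₁})) · (CZ ⊗ I₂) · ((a,b)ᵀ ⊗ (1/2)(1,1,1,−1)ᵀ) = (−1)^{s₁·s₂} · (1/2) · (a,b)ᵀ. Hence in every measurement branch Bob's qubit 3 ends in the input state (a,b)ᵀ up to a global phase, i.e., the state of qubit 3 eventually equals the initial state of qubit 1 on every run (the specification AF (q₃ = init(q₁)) holds). -/
import Mathlib


open Matrix Kronecker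

noncomputable section

/-- Kronecker product reindexed to `Fin`-indexed matrices, with the first factor
most significant (lexicographic ordering of bitstrings). -/
def kron {m n p q : ℕ} (A : Matrix (Fin m) (Fin n) ℂ) (B : Matrix (Fin p) (Fin q) ℂ) :
    Matrix (Fin (m * p)) (Fin (n * q)) ℂ :=
  Matrix.reindex finProdFinEquiv finProdFinEquiv (A ⊗ₖ B)

/-- |+⟩ = (1/√2)(1,1)ᵀ -/
def ketPlus : Matrix (Fin 2) (Fin 1) ℂ := (Real.sqrt 2 : ℂ)⁻¹ • !![1; 1]

/-- |−⟩ = (1/√2)(1,−1)ᵀ -/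
def ketMinus : Matrix (Fin 2) (Fin 1) ℂ := (Real.sqrt 2 : ℂ)⁻¹ • !![1; -1]

/-- ⟨+| : conjugate transpose of |+⟩ -/
def braPlus : Matrix (Fin 1) (Fin 2) ℂ := ketPlusᴴ

/-- ⟨−| : conjugate transpose of |−⟩ -/
def braMinus : Matrix (Fin 1) (Fin 2) ℂ := ketMinusᴴ

/-- ⟨x_s| with |x₀⟩ = |+⟩, |x₁⟩ = |−⟩ -/
def bra : Fin 2 → Matrix (Fin 1) (Fin 2) ℂ := ![braPlus, braMinus]

/-- identity on one qubit -/
def I2 : Matrix (Fin 2) (Fin 2) ℂ := 1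

/-- controlled-Z operator CZ = diag(1,1,1,−1) -/
def CZ : Matrix (Fin 4) (Fin 4) ℂ := !![1,0,0,0; 0,1,0,0; 0,0,1,0; 0,0,0,-1]

/-- Pauli X -/
def X : Matrix (Fin 2) (Fin 2) ℂ := !![0,1; 1,0]

/-- Pauli Z -/
def Z : Matrix (Fin 2) (Fin 2) ℂ := !![1,0; 0,-1]

/-- one-qubit state (a,b)ᵀ -/
def ket (a b : ℂ) : Matrix (Fin 2) (Fin 1) ℂ := !![a; b]

/-- the entangled resource state χ = (1/2)(1,1,1,−1)ᵀ -/
def chi : Matrix (Fin 4) (Fin 1) ℂ := (1/2 : ℂ) • !![1; 1; 1; -1]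

/-- qs₃ = (1/2)(a,a,a,−a,b,b,−b,b)ᵀ -/
def qs3 (a b : ℂ) : Matrix (Fin 8) (Fin 1) ℂ := (1/2 : ℂ) • !![a; a; a; -a; b; b; -b; b]

/-- qs₆ = (1/2)(a+b,a+b,a−b,−a+b)ᵀ -/
def qs6 (a b : ℂ) : Matrix (Fin 4) (Fin 1) ℂ := (1/2 : ℂ) • !![a+b; a+b; a-b; -a+b]

/-- qs₇ = (1/2)(a−b,a−b,a+b,−a−b)ᵀ -/
def qs7 (a b : ℂ) : Matrix (Fin 4) (Fin 1) ℂ := (1/2 : ℂ) • !![a-b; a-b; a+b; -a-b]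

lemma kron_apply' {m n p q : ℕ} (A : Matrix (Fin m) (Fin n) ℂ) (B : Matrix (Fin p) (Fin q) ℂ)
    (i : Fin (m*p)) (j : Fin (n*q)) :
    kron A B i j = A (finProdFinEquiv.symm i).1 (finProdFinEquiv.symm j).1 *
      B (finProdFinEquiv.symm i).2 (finProdFinEquiv.symm j).2 := rfl

@[simp] lemma cv2_1 {α : Type*} (x : α) (u : Fin 1 → α) : Matrix.vecCons x u (1 : Fin 2) = u (0 : Fin 1) := rfl
@[simp] lemma cv3_1 {α : Type*} (x : α) (u : Fin 2 → α) : Matrix.vecCons x u (1 : Fin 3) = u (0 : Fin 2) := rfl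
@[simp] lemma cv3_2 {α : Type*} (x : α) (u : Fin 2 → α) : Matrix.vecCons x u (2 : Fin 3) = u (1 : Fin 2) := rfl
@[simp] lemma cv4_1 {α : Type*} (x : α) (u : Fin 3 → α) : Matrix.vecCons x u (1 : Fin 4) = u (0 : Fin 3) := rfl
@[simp] lemma cv4_2 {α : Type*} (x : α) (u : Fin 3 → α) : Matrix.vecCons x u (2 : Fin 4) = u (1 : Fin 3) := rfl
@[simp] lemma cv4_3 {α : Type*} (x : α) (u : Fin 3 → α) : Matrix.vecCons x u (3 : Fin 4) = u (2 : Fin 3) := rfl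
@[simp] lemma cv5_1 {α : Type*} (x : α) (u : Fin 4 → α) : Matrix.vecCons x u (1 : Fin 5) = u (0 : Fin 4) := rfl
@[simp] lemma cv5_2 {α : Type*} (x : α) (u : Fin 4 → α) : Matrix.vecCons x u (2 : Fin 5) = u (1 : Fin 4) := rfl
@[simp] lemma cv5_3 {α : Type*} (x : α) (u : Fin 4 → α) : Matrix.vecCons x u (3 : Fin 5) = u (2 : Fin 4) := rfl
@[simp] lemma cv5_4 {α : Type*} (x : α) (u : Fin 4 → α) : Matrix.vecCons x u (4 : Fin 5) = u (3 : Fin 4) := rfl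
@[simp] lemma cv6_1 {α : Type*} (x : α) (u : Fin 5 → α) : Matrix.vecCons x u (1 : Fin 6) = u (0 : Fin 5) := rfl
@[simp] lemma cv6_2 {α : Type*} (x : α) (u : Fin 5 → α) : Matrix.vecCons x u (2 : Fin 6) = u (1 : Fin 5) := rfl
@[simp] lemma cv6_3 {α : Type*} (x : α) (u : Fin 5 → α) : Matrix.vecCons x u (3 : Fin 6) = u (2 : Fin 5) := rfl
@[simp] lemma cv6_4 {α : Type*} (x : α) (u : Fin 5 → α) : Matrix.vecCons x u (4 : Fin 6) = u (3 : Fin 5) := rfl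
@[simp] lemma cv6_5 {α : Type*} (x : α) (u : Fin 5 → α) : Matrix.vecCons x u (5 : Fin 6) = u (4 : Fin 5) := rfl
@[simp] lemma cv7_1 {α : Type*} (x : α) (u : Fin 6 → α) : Matrix.vecCons x u (1 : Fin 7) = u (0 : Fin 6) := rfl
@[simp] lemma cv7_2 {α : Type*} (x : α) (u : Fin 6 → α) : Matrix.vecCons x u (2 : Fin 7) = u (1 : Fin 6) := rfl
@[simp] lemma cv7_3 {α : Type*} (x : α) (u : Fin 6 → α) : Matrix.vecCons x u (3 : Fin 7) = u (2 : Fin 6) := rfl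
@[simp] lemma cv7_4 {α : Type*} (x : α) (u : Fin 6 → α) : Matrix.vecCons x u (4 : Fin 7) = u (3 : Fin 6) := rfl
@[simp] lemma cv7_5 {α : Type*} (x : α) (u : Fin 6 → α) : Matrix.vecCons x u (5 : Fin 7) = u (4 : Fin 6) := rfl
@[simp] lemma cv7_6 {α : Type*} (x : α) (u : Fin 6 → α) : Matrix.vecCons x u (6 : Fin 7) = u (5 : Fin 6) := rfl
@[simp] lemma cv8_1 {α : Type*} (x : α) (u : Fin 7 → α) : Matrix.vecCons x u (1 : Fin 8) = u (0 : Fin 7) := rfl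
@[simp] lemma cv8_2 {α : Type*} (x : α) (u : Fin 7 → α) : Matrix.vecCons x u (2 : Fin 8) = u (1 : Fin 7) := rfl
@[simp] lemma cv8_3 {α : Type*} (x : α) (u : Fin 7 → α) : Matrix.vecCons x u (3 : Fin 8) = u (2 : Fin 7) := rfl
@[simp] lemma cv8_4 {α : Type*} (x : α) (u : Fin 7 → α) : Matrix.vecCons x u (4 : Fin 8) = u (3 : Fin 7) := rfl
@[simp] lemma cv8_5 {α : Type*} (x : α) (u : Fin 7 → α) : Matrix.vecCons x u (5 : Fin 8) = u (4 : Fin 7) := rfl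
@[simp] lemma cv8_6 {α : Type*} (x : α) (u : Fin 7 → α) : Matrix.vecCons x u (6 : Fin 8) = u (5 : Fin 7) := rfl
@[simp] lemma cv8_7 {α : Type*} (x : α) (u : Fin 7 → α) : Matrix.vecCons x u (7 : Fin 8) = u (6 : Fin 7) := rfl

lemma hs2 : ((Real.sqrt 2 : ℂ))⁻¹ ^ 2 = 1/2 := by
  have h : ((Real.sqrt 2 : ℝ) : ℂ) ^ 2 = 2 := by
    have := Real.sq_sqrt (by norm_num : (0:ℝ) ≤ 2)
    exact_mod_cast congrArg (fun x : ℝ => (x : ℂ)) this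
  rw [inv_pow, h]
  norm_num

set_option maxHeartbeats 1000000 in
theorem stmt13 (a b : ℂ) (s₁ s₂ : Fin 2) :
    (kron (kron (bra s₁) (bra s₂)) (X ^ (s₂ : ℕ) * Z ^ (s₁ : ℕ)) : Matrix (Fin 2) (Fin 8) ℂ) *
        ((kron CZ I2 : Matrix (Fin 8) (Fin 8) ℂ) *
          (kron (ket a b) chi : Matrix (Fin 8) (Fin 1) ℂ)) =
      ((-1 : ℂ) ^ ((s₁ : ℕ) * (s₂ : ℕ)) * (1/2 : ℂ)) • ket a b := by
  have h1 : (kron CZ I2 : Matrix (Fin 8) (Fin 8) ℂ) * (kron (ket a b) chi) =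
      (1/2 : ℂ) • !![a; a; a; -a; b; b; -b; b] := by
    ext i j
    fin_cases i <;> fin_cases j <;>
      simp (config := { decide := true }) [kron_apply', CZ, I2, ket, chi, Matrix.mul_apply, Fin.sum_univ_succ,
        finProdFinEquiv, Fin.divNat, Fin.modNat, Matrix.one_apply, show ((0:Fin 8):ℕ)=0 from rfl, show ((1:Fin 8):ℕ)=1 from rfl, show ((2:Fin 8):ℕ)=2 from rfl, show ((3:Fin 8):ℕ)=3 from rfl, show ((4:Fin 8):ℕ)=4 from rfl, show ((5:Fin 8):ℕ)=5 from rfl, show ((6:Fin 8):ℕ)=6 from rfl, show ((7:Fin 8):ℕ)=7 from rfl] <;> norm_num <;> ring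
  rw [h1]
  fin_cases s₁ <;> fin_cases s₂ <;>
    · ext i j
      fin_cases i <;> fin_cases j <;>
        · simp (config := { decide := true }) [kron_apply', bra, braPlus, braMinus, ketPlus, ketMinus, X, Z, ket,
            Matrix.one_apply, Matrix.mul_apply, Fin.sum_univ_succ, finProdFinEquiv, Fin.divNat, Fin.modNat, show ((0:Fin 8):ℕ)=0 from rfl, show ((1:Fin 8):ℕ)=1 from rfl, show ((2:Fin 8):ℕ)=2 from rfl, show ((3:Fin 8):ℕ)=3 from rfl, show ((4:Fin 8):ℕ)=4 from rfl, show ((5:Fin 8):ℕ)=5 from rfl, show ((6:Fin 8):ℕ)=6 from rfl, show ((7:Fin 8):ℕ)=7 from rfl] <;> (try norm_num) <;> (try ring_nf) <;>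
        (try simp only [hs2]) <;> (try norm_num) <;> (try ring)
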